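/- If FV(S∘(AB)) is defined, then FV(S∘(AB)) = FV(S∘A) ⊔ FV(S∘B). -/

import Mathlib

abbrev Var := ℕ
abbrev Ctx := Finset Var × List Var

/-- `Γ,x` : extend the local part with `x` as innermost (rightmost) variable.
Lists represent local contexts with head = outermost (leftmost). -/
def Ctx.snoc (Γ : Ctx) (x : Var) : Ctx := (Γ.1, Γ.2 ++ [x])

/-- The least partial order on contexts generated by
`(G,L) < (G ∪ {x}, L)` for `x ∉ G` and `(G,L) < (G \ {x}, x::L)`. -/
inductive CtxLe : Ctx → Ctx → Prop
  | refl (Γ : Ctx) : CtxLe Γ Γ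
  | trans {Γ Δ Θ : Ctx} : CtxLe Γ Δ → CtxLe Δ Θ → CtxLe Γ Θ
  | glob (G : Finset Var) (L : List Var) (x : Var) (h : x ∉ G) :
      CtxLe (G, L) (insert x G, L)
  | loc (G : Finset Var) (L : List Var) (x : Var) :
      CtxLe (G, L) (G.erase x, x :: L)

def Compatible (Γ Δ : Ctx) : Prop := ∃ Θ, CtxLe Γ Θ ∧ CtxLe Δ Θ

/-- Auxiliary supremum on contexts whose local lists have head = innermost. -/
def supAux : Finset Var → List Var → Finset Var → List Var → Option (Finset Var × List Var)
  | G₁, [], G₂, [] => some (G₁ ∪ G₂, [])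
  | G₁, x :: l₁, G₂, [] =>
      (supAux G₁ l₁ (G₂.erase x) []).map fun p => (p.1, x :: p.2)
  | G₁, [], G₂, x :: l₂ =>
      (supAux (G₁.erase x) [] G₂ l₂).map fun p => (p.1, x :: p.2)
  | G₁, x :: l₁, G₂, y :: l₂ =>
      if x = y then (supAux G₁ l₁ G₂ l₂).map fun p => (p.1, x :: p.2) else none
  termination_by _ l₁ _ l₂ => l₁.length + l₂.length

/-- The (partial) supremum `Γ ⊔ Δ` of two contexts. -/
def ctxSup (Γ Δ : Ctx) : Option Ctx :=
  (supAux Γ.1 Γ.2.reverse Δ.1 Δ.2.reverse).map fun p => (p.1, p.2.reverse)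

/-- The partial operation `O_{λx}` : `O_{λx}(Γ,x) = Γ`, `O_{λx}(G, nil) = (G \ {x}, nil)`,
undefined otherwise. -/
def Olam (x : Var) (Γ : Ctx) : Option Ctx :=
  match Γ.2.reverse with
  | [] => some (Γ.1.erase x, [])
  | y :: l => if y = x then some (Γ.1, l.reverse) else none

mutual
/-- Terms of the calculus λα. -/
inductive Tm : Type
  | var : Var → Tm
  | app : Tm → Tm → Tm
  | lam : Var → Tm → Tm
  | sub : Sb → Tm → Tm
/-- Substitutions of the calculus λα: `[B/x]`, `Wx`, `{yx}`, `Sₓ`. -/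
inductive Sb : Type
  | push : Tm → Var → Sb
  | weak : Var → Sb
  | ren : Var → Var → Sb
  | lift : Sb → Var → Sb
end

mutual
/-- The typing judgement `Γ ⊢ A` of λα (rules R1–R6). -/
inductive Judg : Ctx → Tm → Prop
  | r1 {G : Finset Var} {x : Var} (h : x ∈ G) : Judg (G, []) (.var x)
  | r2 (Γ : Ctx) (x : Var) : Judg (Γ.snoc x) (.var x)
  | r3 {Γ : Ctx} {x y : Var} (h : x ≠ y) : Judg Γ (.var x) → Judg (Γ.snoc y) (.var x)
  | r4 {Γ A B} : Judg Γ A → Judg Γ B → Judg Γ (.app A B)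
  | r5 {Γ x A} : Judg (Ctx.snoc Γ x) A → Judg Γ (.lam x A)
  | r6 {Γ Δ S A} : SJudg Γ S Δ → Judg Δ A → Judg Γ (.sub S A)
/-- The judgement `Γ ⊢ S ▷ Δ` of λα (rules R7–R10). -/
inductive SJudg : Ctx → Sb → Ctx → Prop
  | r7 {Γ B x} : Judg Γ B → SJudg Γ (.push B x) (Γ.snoc x)
  | r8 (Γ x) : SJudg (Ctx.snoc Γ x) (.weak x) Γ
  | r9 (Γ y x) : SJudg (Ctx.snoc Γ y) (.ren y x) (Ctx.snoc Γ x)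
  | r10 {Γ Δ S} (x) : SJudg Γ S Δ → SJudg (Ctx.snoc Γ x) (.lift S x) (Ctx.snoc Δ x)
end

mutual
/-- Weight of a term, used for the termination of `FV`. -/
def wT : Tm → ℕ
  | .var _ => 1
  | .app a b => wT a + wT b + 1
  | .lam _ a => wT a + 1
  | .sub s a => wS s + wT a
/-- Weight of a substitution, used for the termination of `FV`. -/
def wS : Sb → ℕ
  | .weak _ => 1
  | .push b _ => wT b + 4
  | .ren _ _ => 4
  | .lift s _ => wS s + 3
end

/-- The partial free-variable function of λα, valued in contexts. -/
def FV : Tm → Option Ctx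
  | .var x => some ({x}, [])
  | .app A B => do ctxSup (← FV A) (← FV B)
  | .lam x A => do Olam x (← FV A)
  | .sub (.weak x) A => (FV A).map (fun Γ => Ctx.snoc Γ x)
  | .sub (.push B x) A => FV (.app (.lam x A) B)
  | .sub (.ren y x) A => FV (.sub (.weak y) (.lam x A))
  | .sub (.lift S x) A => FV (.sub (.weak x) (.sub S (.lam x A)))
  termination_by t => wT t
  decreasing_by all_goals simp [wT, wS] <;> omega

/-!
`FV (S ∘ M)` depends on `FV M` only: it is `FV M >>= S.actCtx`, where `S.actCtx` is a composite
of the partial maps `O_{λx}`, `Γ ↦ Γ,x` and `Γ ↦ Γ ⊔ FV B`. Each of these distributes over `⊔`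
wherever defined (for the last one this is `(A ⊔ B) ⊔ C = (A ⊔ C) ⊔ (B ⊔ C)`), hence so does
`S.actCtx`, and `FV (S ∘ AB) = S.actCtx (FV A ⊔ FV B)` splits as claimed.

All three distributivity facts are read off a closed form of `⊔`: `Γ ⊔ Δ` is defined iff one
local list is a suffix of the other; the longer one is then the local list of `Γ ⊔ Δ`, and the
variables it adds to the locals of `Γ` (resp. `Δ`) are removed from the globals of `Γ` (resp. `Δ`).
-/
theorem erase_sdiff_toFinset {α : Type*} [DecidableEq α] (G : Finset α) (x : α) (l : List α) :
    G.erase x \ l.toFinset = G \ (x :: l).toFinset := by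
  rw [Finset.erase_sdiff_comm, List.toFinset_cons, Finset.sdiff_insert]

theorem exists_of_supAux_eq_some {G₁ G₂ G : Finset Var} {l₁ l₂ l : List Var}
    (h : supAux G₁ l₁ G₂ l₂ = some (G, l)) :
    ∃ p q, l = l₁ ++ p ∧ l = l₂ ++ q ∧ (p = [] ∨ q = []) ∧
      G = G₁ \ p.toFinset ∪ G₂ \ q.toFinset := by
  induction G₁, l₁, G₂, l₂ using supAux.induct generalizing G l with
  | case1 G₁ G₂ =>
    rw [supAux] at h
    obtain ⟨rfl, rfl⟩ := Prod.mk.inj (Option.some.inj h.symm)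
    exact ⟨[], [], rfl, rfl, .inl rfl, by simp⟩
  | case2 G₁ x l₁ G₂ ih =>
    rw [supAux, Option.map_eq_some_iff] at h
    obtain ⟨⟨G', l'⟩, hrec, he⟩ := h
    obtain ⟨rfl, rfl⟩ := Prod.mk.inj he
    obtain ⟨p, q, rfl, rfl, hpq, rfl⟩ := ih hrec
    refine ⟨p, x :: l₁ ++ p, rfl, rfl, .inl ?_, by rw [erase_sdiff_toFinset]; rfl⟩
    exact hpq.elim id fun hnil => (List.append_eq_nil_iff.mp hnil).2
  | case3 G₁ G₂ x l₂ ih =>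
    rw [supAux, Option.map_eq_some_iff] at h
    obtain ⟨⟨G', l'⟩, hrec, he⟩ := h
    obtain ⟨rfl, rfl⟩ := Prod.mk.inj he
    obtain ⟨p, q, rfl, rfl, hpq, rfl⟩ := ih hrec
    refine ⟨x :: l₂ ++ q, q, rfl, rfl, .inr ?_, by rw [erase_sdiff_toFinset]; rfl⟩
    exact hpq.elim (fun hnil => (List.append_eq_nil_iff.mp hnil).2) id
  | case4 G₁ l₁ G₂ x l₂ ih =>
    rw [supAux, if_pos rfl, Option.map_eq_some_iff] at h
    obtain ⟨⟨G', l'⟩, hrec, he⟩ := h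
    obtain ⟨rfl, rfl⟩ := Prod.mk.inj he
    obtain ⟨p, q, rfl, hl, hpq, rfl⟩ := ih hrec
    exact ⟨p, q, rfl, by rw [hl]; rfl, hpq, rfl⟩
  | case5 G₁ x l₁ G₂ y l₂ hxy => simp [supAux, hxy] at h

theorem supAux_eq_some {G₁ G₂ : Finset Var} {l₁ l₂ p q : List Var} (hl : l₁ ++ p = l₂ ++ q)
    (hpq : p = [] ∨ q = []) :
    supAux G₁ l₁ G₂ l₂ = some (G₁ \ p.toFinset ∪ G₂ \ q.toFinset, l₁ ++ p) := by
  induction G₁, l₁, G₂, l₂ using supAux.induct generalizing p q with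
  | case1 G₁ G₂ =>
    obtain ⟨rfl, rfl⟩ : p = [] ∧ q = [] := by
      rcases hpq with rfl | rfl <;> simp_all
    simp [supAux]
  | case2 G₁ x l₁ G₂ ih =>
    obtain rfl : q = x :: l₁ ++ p := by simpa using hl.symm
    rw [supAux, ih (p := p) (q := l₁ ++ p) (by simp) (.inl (by simpa using hpq)),
      erase_sdiff_toFinset]
    rfl
  | case3 G₁ G₂ x l₂ ih =>
    obtain rfl : p = x :: l₂ ++ q := by simpa using hl
    rw [supAux, ih (p := l₂ ++ q) (q := q) (by simp) (.inr (by simpa using hpq)),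
      erase_sdiff_toFinset]
    rfl
  | case4 G₁ l₁ G₂ x l₂ ih =>
    rw [supAux, if_pos rfl, ih (List.cons_inj_right x |>.mp hl) hpq]
    rfl
  | case5 G₁ x l₁ G₂ y l₂ hxy => exact absurd (List.cons_eq_cons.mp hl).1 hxy

theorem ctxSup_eq_some_iff {Γ Δ Θ : Ctx} :
    ctxSup Γ Δ = some Θ ↔ ∃ p q, Θ.2 = p ++ Γ.2 ∧ Θ.2 = q ++ Δ.2 ∧ (p = [] ∨ q = []) ∧
      Θ.1 = Γ.1 \ p.toFinset ∪ Δ.1 \ q.toFinset := by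
  constructor
  · intro h
    obtain ⟨⟨G, l⟩, hsup, rfl⟩ := Option.map_eq_some_iff.mp h
    obtain ⟨p, q, rfl, hq, hpq, rfl⟩ := exists_of_supAux_eq_some hsup
    refine ⟨p.reverse, q.reverse, by simp, by simp [hq], by simpa using hpq, by simp⟩
  · rintro ⟨p, q, hp, hq, hpq, hG⟩
    have hl : Γ.2.reverse ++ p.reverse = Δ.2.reverse ++ q.reverse := by
      rw [← List.reverse_append, ← List.reverse_append, ← hp, ← hq]
    rw [ctxSup, supAux_eq_some hl (by simpa using hpq)]
    simp only [Option.map_some, List.reverse_append, List.reverse_reverse, ← hp,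
      List.toFinset_reverse, ← hG]

section CtxSup

variable {Γ Δ Θ : Ctx}

theorem suffix_of_ctxSup_left (h : ctxSup Γ Δ = some Θ) : Γ.2 <:+ Θ.2 := by
  obtain ⟨p, -, hp, -⟩ := ctxSup_eq_some_iff.mp h
  exact ⟨p, hp.symm⟩

theorem suffix_of_ctxSup_right (h : ctxSup Γ Δ = some Θ) : Δ.2 <:+ Θ.2 := by
  obtain ⟨-, q, -, hq, -⟩ := ctxSup_eq_some_iff.mp h
  exact ⟨q, hq.symm⟩

theorem ctxSup_snd_eq_or (h : ctxSup Γ Δ = some Θ) : Θ.2 = Γ.2 ∨ Θ.2 = Δ.2 := by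
  obtain ⟨p, q, hp, hq, hpq, -⟩ := ctxSup_eq_some_iff.mp h
  rcases hpq with rfl | rfl
  · exact .inl hp
  · exact .inr hq

theorem exists_ctxSup_of_suffix {L : List Var} (hΓ : Γ.2 <:+ L) (hΔ : Δ.2 <:+ L) :
    ∃ Θ, ctxSup Γ Δ = some Θ ∧ Θ.2 <:+ L := by
  rcases List.suffix_or_suffix_of_suffix hΓ hΔ with ⟨r, hr⟩ | ⟨r, hr⟩
  · exact ⟨(Γ.1 \ r.toFinset ∪ Δ.1, Δ.2),
      ctxSup_eq_some_iff.mpr ⟨r, [], hr.symm, rfl, .inr rfl, by simp⟩, hΔ⟩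
  · exact ⟨(Γ.1 ∪ Δ.1 \ r.toFinset, Γ.2),
      ctxSup_eq_some_iff.mpr ⟨[], r, rfl, hr.symm, .inl rfl, by simp⟩, hΓ⟩

/-- Extending the locals of `Γ ⊔ Δ` outwards to `L` (and removing the new locals from the globals)
commutes with `⊔`. -/
theorem sdiff_of_ctxSup (h : ctxSup Γ Δ = some Θ) {L s p q : List Var} (hΘ : s ++ Θ.2 = L)
    (hΓ : p ++ Γ.2 = L) (hΔ : q ++ Δ.2 = L) :
    Θ.1 \ s.toFinset = Γ.1 \ p.toFinset ∪ Δ.1 \ q.toFinset := by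
  obtain ⟨p₀, q₀, hp₀, hq₀, -, hG⟩ := ctxSup_eq_some_iff.mp h
  obtain rfl : p = s ++ p₀ := List.append_cancel_right (by rw [hΓ, ← hΘ, hp₀, List.append_assoc])
  obtain rfl : q = s ++ q₀ := List.append_cancel_right (by rw [hΔ, ← hΘ, hq₀, List.append_assoc])
  simp only [hG, Finset.union_sdiff_distrib, sdiff_sdiff_left, List.toFinset_append,
    Finset.sup_eq_union, Finset.union_comm]

end CtxSup

def DistribCtxSup (f : Ctx → Option Ctx) : Prop :=
  ∀ ⦃Γ Δ Θ Φ : Ctx⦄, ctxSup Γ Δ = some Θ → f Θ = some Φ →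
    ∃ Φa Φb, f Γ = some Φa ∧ f Δ = some Φb ∧ ctxSup Φa Φb = some Φ

theorem DistribCtxSup.bind {f g : Ctx → Option Ctx} (hf : DistribCtxSup f)
    (hg : DistribCtxSup g) : DistribCtxSup fun Γ => f Γ >>= g := by
  intro Γ Δ Θ Φ hs h
  obtain ⟨Ψ, hΨ, hΦ⟩ := Option.bind_eq_some_iff.mp h
  obtain ⟨Ψa, Ψb, ha, hb, hΨs⟩ := hf hs hΨ
  obtain ⟨Φa, Φb, ha', hb', hΦs⟩ := hg hΨs hΦ
  exact ⟨Φa, Φb, by simp [ha, ha'], by simp [hb, hb'], hΦs⟩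

theorem distribCtxSup_snoc (x : Var) : DistribCtxSup fun Γ => some (Γ.snoc x) := by
  intro Γ Δ Θ Φ hs h
  obtain rfl : Θ.snoc x = Φ := Option.some.inj h
  obtain ⟨p, q, hp, hq, hpq, hG⟩ := ctxSup_eq_some_iff.mp hs
  exact ⟨_, _, rfl, rfl, ctxSup_eq_some_iff.mpr ⟨p, q, by simp [Ctx.snoc, hp],
    by simp [Ctx.snoc, hq], hpq, hG⟩⟩

theorem Olam_nil (x : Var) (G : Finset Var) : Olam x (G, []) = some (G.erase x, []) := rfl

theorem Olam_append_singleton (x y : Var) (G : Finset Var) (L : List Var) :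
    Olam x (G, L ++ [y]) = if y = x then some (G, L) else none := by
  simp [Olam]

theorem exists_Olam_of_append_eq {x : Var} {Γ : Ctx} {p L : List Var}
    (h : p ++ Γ.2 = L ++ [x]) :
    ∃ Γ' p', Olam x Γ = some Γ' ∧ p' ++ Γ'.2 = L ∧ Γ'.1 \ p'.toFinset = Γ.1 \ p.toFinset ∧
      (p = [] → p' = []) := by
  obtain ⟨G, M⟩ := Γ
  rcases List.eq_nil_or_concat' M with rfl | ⟨M, z, rfl⟩
  · obtain rfl : p = L ++ [x] := by simpa using h
    refine ⟨(G.erase x, []), L, rfl, by simp, ?_, by simp⟩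
    rw [erase_sdiff_toFinset]
    simp
  · rw [← List.append_assoc] at h
    obtain ⟨rfl, hz⟩ := List.append_inj' h rfl
    refine ⟨(G, M), p, ?_, rfl, rfl, id⟩
    simp_all [Olam_append_singleton]

theorem distribCtxSup_Olam (x : Var) : DistribCtxSup (Olam x) := by
  rintro ⟨G₁, L₁⟩ ⟨G₂, L₂⟩ ⟨G, L⟩ Θ' hs ho
  obtain ⟨p, q, hp, hq, hpq, hG⟩ := ctxSup_eq_some_iff.mp hs
  dsimp only at hp hq hG
  rcases List.eq_nil_or_concat' L with rfl | ⟨L, y, rfl⟩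
  · obtain ⟨rfl, rfl⟩ := List.append_eq_nil_iff.mp hp.symm
    obtain ⟨rfl, rfl⟩ := List.append_eq_nil_iff.mp hq.symm
    obtain rfl := Option.some.inj ho.symm
    refine ⟨_, _, Olam_nil x G₁, Olam_nil x G₂, ctxSup_eq_some_iff.mpr
      ⟨[], [], rfl, rfl, .inl rfl, by simp [hG, Finset.erase_union_distrib]⟩⟩
  · rw [Olam_append_singleton] at ho
    split_ifs at ho with hyx
    obtain rfl := Option.some.inj ho.symm
    subst hyx
    obtain ⟨Γ', p', hΓ', hp', hGp, hpp⟩ := exists_Olam_of_append_eq (Γ := (G₁, L₁)) hp.symm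
    obtain ⟨Δ', q', hΔ', hq', hGq, hqq⟩ := exists_Olam_of_append_eq (Γ := (G₂, L₂)) hq.symm
    refine ⟨Γ', Δ', hΓ', hΔ', ctxSup_eq_some_iff.mpr
      ⟨p', q', hp'.symm, hq'.symm, hpq.imp hpp hqq, ?_⟩⟩
    rw [hGp, hGq]
    exact hG

theorem distribCtxSup_ctxSup_right (C : Ctx) : DistribCtxSup (ctxSup · C) := by
  intro A B AB E hAB hE
  have hA : A.2 <:+ E.2 := (suffix_of_ctxSup_left hAB).trans (suffix_of_ctxSup_left hE)
  have hB : B.2 <:+ E.2 := (suffix_of_ctxSup_right hAB).trans (suffix_of_ctxSup_left hE)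
  have hC : C.2 <:+ E.2 := suffix_of_ctxSup_right hE
  obtain ⟨P, hP, hPE⟩ := exists_ctxSup_of_suffix hA hC
  obtain ⟨Q, hQ, hQE⟩ := exists_ctxSup_of_suffix hB hC
  obtain ⟨E', hE', hE'E⟩ := exists_ctxSup_of_suffix hPE hQE
  refine ⟨P, Q, hP, hQ, ?_⟩
  have hlocal : E'.2 = E.2 := by
    refine hE'E.eq_of_length (le_antisymm hE'E.length_le ?_)
    suffices E.2 <:+ E'.2 from this.length_le
    have hPE' := suffix_of_ctxSup_left hE'
    have hQE' := suffix_of_ctxSup_right hE'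
    rcases ctxSup_snd_eq_or hE with h | h <;> rw [h]
    · rcases ctxSup_snd_eq_or hAB with h' | h' <;> rw [h']
      · exact (suffix_of_ctxSup_left hP).trans hPE'
      · exact (suffix_of_ctxSup_left hQ).trans hQE'
    · exact (suffix_of_ctxSup_right hP).trans hPE'
  obtain ⟨a, ha⟩ := hA
  obtain ⟨b, hb⟩ := hB
  obtain ⟨c, hc⟩ := hC
  obtain ⟨ab, hab⟩ := suffix_of_ctxSup_left hE
  obtain ⟨pP, hpP⟩ := hPE
  obtain ⟨pQ, hpQ⟩ := hQE
  have hglobE := sdiff_of_ctxSup hE (s := []) rfl hab hc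
  have hglobE' := sdiff_of_ctxSup hE' (s := []) (by rw [hlocal]; rfl) hpP hpQ
  rw [sdiff_of_ctxSup hAB hab ha hb] at hglobE
  rw [sdiff_of_ctxSup hP hpP ha hc, sdiff_of_ctxSup hQ hpQ hb hc] at hglobE'
  rw [hE']
  refine congrArg some (Prod.ext ?_ hlocal)
  simp only [List.toFinset_nil, Finset.sdiff_empty] at hglobE hglobE'
  rw [hglobE, hglobE', Finset.union_union_union_comm, Finset.union_idempotent]

def Sb.actCtx : Sb → Ctx → Option Ctx
  | .weak x, Γ => some (Γ.snoc x)
  | .push B x, Γ => Olam x Γ >>= fun Γ' => FV B >>= ctxSup Γ'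
  | .ren y x, Γ => Olam x Γ >>= fun Γ' => some (Γ'.snoc y)
  | .lift S x, Γ => Olam x Γ >>= S.actCtx >>= fun Γ' => some (Γ'.snoc x)

theorem FV_sub : ∀ (S : Sb) (M : Tm), FV (.sub S M) = FV M >>= S.actCtx
  | .push B x, M => by
    simp only [FV]
    cases FV M <;> simp [Sb.actCtx]
  | .weak x, M => by
    simp only [FV]
    cases FV M <;> simp [Sb.actCtx]
  | .ren y x, M => by
    simp only [FV]
    cases FV M <;> simp [Sb.actCtx, Option.map_eq_bind]
  | .lift S x, M => by
    rw [FV, FV, FV_sub S, FV]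
    cases FV M <;> simp [Sb.actCtx, Option.map_eq_bind, Option.bind_assoc]

theorem distribCtxSup_actCtx : ∀ S : Sb, DistribCtxSup S.actCtx
  | .push B x => by
    cases hB : FV B with
    | none =>
      intro _ _ _ _ _ h
      simp [Sb.actCtx, hB] at h
    | some C =>
      have hact : Sb.actCtx (.push B x) = fun Γ => Olam x Γ >>= (ctxSup · C) := by
        funext Γ
        simp [Sb.actCtx, hB]
      rw [hact]
      exact (distribCtxSup_Olam x).bind (distribCtxSup_ctxSup_right C)
  | .weak x => distribCtxSup_snoc x
  | .ren y x => (distribCtxSup_Olam x).bind (distribCtxSup_snoc y)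
  | .lift S x =>
    ((distribCtxSup_Olam x).bind (distribCtxSup_actCtx S)).bind (distribCtxSup_snoc x)

/-- If `FV(S∘(AB))` is defined then `FV(S∘(AB)) = FV(S∘A) ⊔ FV(S∘B)`. -/
theorem FV_sub_app (S : Sb) (A B : Tm) (Φ : Ctx)
    (h : FV (.sub S (.app A B)) = some Φ) :
    ∃ Φa Φb : Ctx, FV (.sub S A) = some Φa ∧ FV (.sub S B) = some Φb ∧
      ctxSup Φa Φb = some Φ := by
  rw [FV_sub, FV] at h
  obtain ⟨Θ, hAB, hΘ⟩ := Option.bind_eq_some_iff.mp h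
  obtain ⟨a, ha, hB⟩ := Option.bind_eq_some_iff.mp hAB
  obtain ⟨b, hb, hab⟩ := Option.bind_eq_some_iff.mp hB
  obtain ⟨Φa, Φb, hΦa, hΦb, hΦ⟩ := distribCtxSup_actCtx S hab hΘ
  exact ⟨Φa, Φb, by rw [FV_sub, ha]; exact hΦa, by rw [FV_sub, hb]; exact hΦb, hΦ⟩
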